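/- Reparametrization theorem, comparison estimate: There exists a constant c₀ > 0, depending only on m, n, Q, r − s and r/s, such that whenever hypothesis (H) holds and N : Σ → 𝒜_Q(ℝ^{m+n}) is the well-defined map N(p) := ∑_{v ∈ κ_p, |v| < c₀} M(p+v)⟦v⟧, then for every x ∈ B_s one has (1/(2√Q)) |N(Φ(x))| ≤ 𝒢(f(x), Q⟦φ(x)⟧) ≤ 2√Q |N(Φ(x))|, where |N(p)| := 𝒢(N(p), Q⟦0⟧). -/

import Mathlib

open scoped BigOperators
open Metric MeasureTheory Asymptotics
open scoped Classical

noncomputable section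

/-- `Euc n` is the Euclidean space `ℝⁿ`. -/
abbrev Euc (n : ℕ) : Type := EuclideanSpace ℝ (Fin n)

/-- Two `Q`-tuples of points are identified when they differ by a permutation of the indices. -/
def QPerm (α : Type*) (Q : ℕ) : Setoid (Fin Q → α) where
  r f g := ∃ σ : Equiv.Perm (Fin Q), f = g ∘ σ
  iseqv := by
    refine ⟨fun f => ⟨Equiv.refl _, rfl⟩, ?_, ?_⟩
    · rintro f g ⟨σ, rfl⟩
      exact ⟨σ.symm, by ext i; simp⟩
    · rintro f g h ⟨σ, rfl⟩ ⟨ρ, rfl⟩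
      exact ⟨σ.trans ρ, by ext i; simp⟩

/-- The space `𝒜_Q(α)` of `Q`-points of `α`: unordered `Q`-tuples of points of `α`. -/
abbrev AQ (α : Type*) (Q : ℕ) : Type _ := Quotient (QPerm α Q)

/-- The `Q`-point `∑_l ⟦f l⟧`. -/
def AQmk {α : Type*} {Q : ℕ} (f : Fin Q → α) : AQ α Q := Quotient.mk (QPerm α Q) f

/-- `𝒢` computed on representatives: `min_{σ ∈ 𝒫_Q} (∑_l ‖v_l - w_{σ(l)}‖²)^{1/2}`. -/
def Gfun {α : Type*} [NormedAddCommGroup α] {Q : ℕ} (f g : Fin Q → α) : ℝ :=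
  ⨅ σ : Equiv.Perm (Fin Q), Real.sqrt (∑ l, ‖f l - g (σ l)‖ ^ 2)

/-- The metric `𝒢` on `𝒜_Q(α)`; it is computed on (arbitrary) representatives, which is
well posed since `Gfun` is invariant under permutations of either argument. -/
def Gdist {α : Type*} [NormedAddCommGroup α] {Q : ℕ} (T₁ T₂ : AQ α Q) : ℝ :=
  Gfun T₁.out T₂.out

/-- The multiplicity `Θ_T(v)` of the value `v` in the `Q`-point `T`. -/
def Theta {α : Type*} {Q : ℕ} (T : AQ α Q) (v : α) : ℕ :=
  {l : Fin Q | T.out l = v}.ncard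

/-- The support `spt(T) = {v_1, …, v_Q}` of a `Q`-point. -/
def AQspt {α : Type*} {Q : ℕ} (T : AQ α Q) : Set α := Set.range T.out

/-- The center of mass `η(T) := Q⁻¹ ∑_l v_l` of a `Q`-point. -/
def AQeta {α : Type*} [AddCommGroup α] [Module ℝ α] {Q : ℕ} (T : AQ α Q) : α :=
  (Q : ℝ)⁻¹ • ∑ l, T.out l

/-- `ℝ^{m+n} = ℝ^m × ℝ^n` with the Euclidean (L²) norm. -/
abbrev EucP (m n : ℕ) : Type := WithLp 2 (Euc m × Euc n)

/-- The point of `ℝ^{m+n}` with horizontal part `x` and vertical part `y`. -/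
def mkP {m n : ℕ} (x : Euc m) (y : Euc n) : EucP m n :=
  (WithLp.equiv 2 (Euc m × Euc n)).symm (x, y)

/-- Orthogonal projection `p_{π₀}` of `ℝ^{m+n}` onto `ℝ^m × {0} ≃ ℝ^m`. -/
def projH {m n : ℕ} (ξ : EucP m n) : Euc m := (WithLp.equiv 2 (Euc m × Euc n) ξ).1

/-- Orthogonal projection `p_{π₀^⊥}` of `ℝ^{m+n}` onto `{0} × ℝ^n ≃ ℝ^n`. -/
def projV {m n : ℕ} (ξ : EucP m n) : Euc n := (WithLp.equiv 2 (Euc m × Euc n) ξ).2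

/-- The linear map `τ ↦ (τ, A τ)`, whose range is the tangent plane of a graph. -/
def graphMap {m n : ℕ} (A : Euc m →L[ℝ] Euc n) : Euc m →ₗ[ℝ] EucP m n :=
  (WithLp.linearEquiv 2 ℝ (Euc m × Euc n)).symm.toLinearMap.comp
    ((LinearMap.id : Euc m →ₗ[ℝ] Euc m).prod (A : Euc m →ₗ[ℝ] Euc n))

/-- The graph parametrization `Φ(x) := (x, φ(x))`. -/
def Phi {m n : ℕ} (φ : Euc m → Euc n) (x : Euc m) : EucP m n := mkP x (φ x)

/-- The tangent space `T_{Φ(x)} Gr(φ) = {(τ, Dφ(x)·τ) : τ ∈ ℝ^m}` of the graph of `φ`. -/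
def tangentSpace {m n : ℕ} (φ : Euc m → Euc n) (x : Euc m) : Submodule ℝ (EucP m n) :=
  LinearMap.range (graphMap (fderiv ℝ φ x))

/-- `v ∈ κ_{Φ(x)}`: `v` is orthogonal to the tangent space of the graph of `φ` at `Φ(x)`. -/
def IsNormalAt {m n : ℕ} (φ : Euc m → Euc n) (x : Euc m) (v : EucP m n) : Prop :=
  v ∈ (tangentSpace φ x)ᗮ

/-- The multiplicity function `M(ξ) := Θ_{f(p_{π₀}(ξ))}(p_{π₀^⊥}(ξ))` of the multisection
associated to the `Q`-valued function `f`. -/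
def Mmap {m n Q : ℕ} (f : Euc m → AQ (Euc n) Q) (ξ : EucP m n) : ℕ :=
  Theta (f (projH ξ)) (projV ξ)

/-- Hypothesis (H): `φ` is `C³` on `B_s`, `f` is `L`-Lipschitz on `B_r` (w.r.t. `𝒢`), and
`‖φ‖_{C²} + Lip(f) ≤ c₀`, `‖φ‖_{C⁰} + ‖f‖_{C⁰} ≤ c₀ s`. -/
def HypH {m n Q : ℕ} (s r c₀ L : ℝ) (φ : Euc m → Euc n) (f : Euc m → AQ (Euc n) Q) : Prop :=
  0 ≤ L ∧ ContDiffOn ℝ 3 φ (ball (0 : Euc m) s) ∧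
  (∀ x ∈ ball (0 : Euc m) r, ∀ y ∈ ball (0 : Euc m) r, Gdist (f x) (f y) ≤ L * dist x y) ∧
  (∀ x ∈ ball (0 : Euc m) s,
    ‖φ x‖ + ‖fderiv ℝ φ x‖ + ‖fderiv ℝ (fderiv ℝ φ) x‖ + L ≤ c₀) ∧
  (∀ x ∈ ball (0 : Euc m) s, ∀ y ∈ ball (0 : Euc m) r,
    ‖φ x‖ + Gdist (f y) (AQmk (fun _ => (0 : Euc n))) ≤ c₀ * s)

/-- `T = N(Φ(x))`: `T` is the `Q`-point of `ℝ^{m+n}` whose multiplicity at each `v` equals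
`M(Φ(x)+v)` when `v` is a normal vector to the graph of `φ` at `Φ(x)` with `|v| < c₀`, and
vanishes otherwise.  This characterizes the reparametrizing normal vector field `N`. -/
def IsNField {m n Q : ℕ} (c₀ : ℝ) (φ : Euc m → Euc n) (f : Euc m → AQ (Euc n) Q)
    (x : Euc m) (T : AQ (EucP m n) Q) : Prop :=
  ∀ v : EucP m n, Theta T v =
    if IsNormalAt φ x v ∧ ‖v‖ < c₀ then Mmap f (Phi φ x + v) else 0

/-- The set `M_p` (for `p = Φ(x)`) of the points `p + v`, `v ∈ κ_p`, `|v| < c₀`, of the fiber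
of the tubular neighborhood over `p` carrying positive multiplicity. -/
def MsetAt {m n Q : ℕ} (c₀ : ℝ) (φ : Euc m → Euc n) (f : Euc m → AQ (Euc n) Q)
    (x : Euc m) : Set (EucP m n) :=
  {ξ | ∃ v : EucP m n, IsNormalAt φ x v ∧ ‖v‖ < c₀ ∧ ξ = Phi φ x + v ∧ 0 < Mmap f ξ}

/-!
Write a point of the normal fibre over `Φ(x)` as `v = (h, w)`, `h` horizontal and `w` vertical.
Normality means `h = -Dφ(x)ᵀ w`, so `|h| ≤ c₀ |w|`. If `v` is a sheet of `N(Φ(x))`, then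
`φ(x) + w` is a value of `f` at `x + h`, hence lies within `c₀ |h| ≤ c₀² |v|` of a value of `f(x)`;
this gives `|v| ≤ 2 𝒢(f(x), Q⟦φ(x)⟧)` sheet by sheet.

Conversely, let `y₁` be a value of `f(x)` at maximal distance `d` from `φ(x)`, so that
`𝒢(f(x), Q⟦φ(x)⟧) ≤ √Q d`. For every `w` the vector `v = (-Dφ(x)ᵀ w, w)` is normal, and it is a
sheet of `N(Φ(x))` as soon as `|v| < c₀` and `y := φ(x) + w ∈ spt f(π y)`, where
`π y := x - Dφ(x)ᵀ (y - φ(x))`. The set-valued map `y ↦ spt f(π y)` is a `c₀²`-contraction for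
the Hausdorff distance, so Nadler's iteration started at `φ(x)`, `y₁` converges to such a fixed
point `y`, at distance at most `c₀² d / (1 - c₀²)` from `y₁`; hence `|v| ≥ |w| ≥ d / 2`.
-/

section QPoints

variable {α : Type*} {Q : ℕ}

lemma AQmk_const_out (c : α) : (AQmk (fun _ : Fin Q => c)).out = fun _ => c := by
  obtain ⟨σ, h⟩ := Quotient.mk_out (s := QPerm α Q) (fun _ : Fin Q => c)
  exact h

lemma Theta_pos_iff (T : AQ α Q) (v : α) : 0 < Theta T v ↔ v ∈ AQspt T := by
  rw [Theta, Set.ncard_pos (Set.toFinite _)]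
  rfl

variable [NormedAddCommGroup α]

lemma Gdist_nonneg (S T : AQ α Q) : 0 ≤ Gdist S T :=
  le_ciInf fun _ => Real.sqrt_nonneg _

lemma Gdist_AQmk_const (T : AQ α Q) (c : α) :
    Gdist T (AQmk fun _ => c) = √(∑ l, ‖T.out l - c‖ ^ 2) := by
  rw [Gdist, Gfun, AQmk_const_out]
  exact ciInf_const

lemma norm_sub_le_Gdist_AQmk {T : AQ α Q} {v : α} (hv : v ∈ AQspt T) (c : α) :
    ‖v - c‖ ≤ Gdist T (AQmk fun _ => c) := by
  obtain ⟨l, rfl⟩ := hv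
  rw [Gdist_AQmk_const, ← Real.sqrt_sq (norm_nonneg _)]
  exact Real.sqrt_le_sqrt <| Finset.single_le_sum (fun k _ => sq_nonneg ‖T.out k - c‖)
    (Finset.mem_univ l)

lemma Gdist_AQmk_le {T : AQ α Q} {c : α} {D : ℝ} (hD0 : 0 ≤ D)
    (hD : ∀ v ∈ AQspt T, ‖v - c‖ ≤ D) : Gdist T (AQmk fun _ => c) ≤ √Q * D := by
  have hsum : ∑ l, ‖T.out l - c‖ ^ 2 ≤ Q * D ^ 2 := by
    calc ∑ l, ‖T.out l - c‖ ^ 2 ≤ ∑ _l : Fin Q, D ^ 2 :=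
          Finset.sum_le_sum fun l _ => pow_le_pow_left₀ (norm_nonneg _) (hD _ ⟨l, rfl⟩) 2
      _ = Q * D ^ 2 := by simp
  calc Gdist T (AQmk fun _ => c) ≤ √(Q * D ^ 2) := by
        rw [Gdist_AQmk_const]; exact Real.sqrt_le_sqrt hsum
    _ = √Q * D := by rw [Real.sqrt_mul (Nat.cast_nonneg Q), Real.sqrt_sq hD0]

lemma exists_dist_le_Gdist {S : AQ α Q} {a : α} (ha : a ∈ AQspt S) (T : AQ α Q) :
    ∃ b ∈ AQspt T, dist a b ≤ Gdist S T := by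
  obtain ⟨l, rfl⟩ := ha
  have : Nonempty (Fin Q) := ⟨l⟩
  obtain ⟨k, hk⟩ := Finite.exists_min fun k => ‖S.out l - T.out k‖
  refine ⟨T.out k, ⟨k, rfl⟩, le_ciInf fun σ => ?_⟩
  rw [dist_eq_norm, ← Real.sqrt_sq (norm_nonneg _)]
  exact Real.sqrt_le_sqrt <| (pow_le_pow_left₀ (norm_nonneg _) (hk (σ l)) 2).trans <|
    Finset.single_le_sum (fun k _ => sq_nonneg ‖S.out k - T.out (σ k)‖) (Finset.mem_univ l)

end QPoints

open Filter Topology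

section SetValuedContraction

variable {E : Type*} [PseudoMetricSpace E] {F : E → Set E} {K : ℝ} {y₀ y₁ : E}

lemma exists_seq_of_setValued_contraction (hK0 : 0 ≤ K) (hK1 : K < 1) (h₁ : y₁ ∈ F y₀)
    (hF : ∀ p ∈ closedBall y₀ (dist y₀ y₁ / (1 - K)), ∀ q ∈ closedBall y₀ (dist y₀ y₁ / (1 - K)),
      ∀ a ∈ F q, ∃ b ∈ F p, dist a b ≤ K * dist q p) :
    ∃ y : ℕ → E, y 1 = y₁ ∧ ∀ k, y (k + 1) ∈ F (y k) ∧
      dist (y k) (y (k + 1)) ≤ dist y₀ y₁ * K ^ k ∧ y k ∈ closedBall y₀ (dist y₀ y₁ / (1 - K)) := by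
  classical
  set R := dist y₀ y₁ / (1 - K)
  have hR : dist y₀ y₁ = (1 - K) * R := (mul_div_cancel₀ _ (sub_pos.2 hK1).ne').symm
  let next : E → E → E := fun q p =>
    if h : ∃ b ∈ F p, dist p b ≤ K * dist q p then h.choose else p
  let z : ℕ → E × E := fun k => (fun z : E × E => (z.2, next z.1 z.2))^[k] (y₀, y₁)
  let y : ℕ → E := fun k => (z k).1
  have hy : ∀ k, y (k + 2) = next (y k) (y (k + 1)) := fun k => by
    simp only [y, z, Function.iterate_succ_apply']
  -- the sharper bound `dist y₀ (y k) ≤ (1 - K ^ k) R` is what propagates along the induction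
  have key : ∀ k, y (k + 1) ∈ F (y k) ∧ dist (y k) (y (k + 1)) ≤ dist y₀ y₁ * K ^ k ∧
      dist y₀ (y k) ≤ (1 - K ^ k) * R := by
    intro k
    induction k with
    | zero => exact ⟨h₁, by simp [y, z], by simp [y, z]⟩
    | succ k ih =>
      obtain ⟨hmem, hstep, hdist⟩ := ih
      have hK : 0 ≤ K ^ k := pow_nonneg hK0 k
      have hdist' : dist y₀ (y (k + 1)) ≤ (1 - K ^ (k + 1)) * R := by
        calc dist y₀ (y (k + 1)) ≤ dist y₀ (y k) + dist (y k) (y (k + 1)) := dist_triangle _ _ _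
          _ ≤ (1 - K ^ k) * R + (1 - K) * R * K ^ k := by rw [← hR]; gcongr
          _ = (1 - K ^ (k + 1)) * R := by ring
      have hR0 : 0 ≤ R := div_nonneg dist_nonneg (sub_pos.2 hK1).le
      have hball : ∀ j, dist y₀ (y j) ≤ (1 - K ^ j) * R → y j ∈ closedBall y₀ R := fun j hj => by
        rw [mem_closedBall, dist_comm]
        nlinarith [pow_nonneg hK0 j]
      obtain ⟨b, hb⟩ := hF _ (hball _ hdist') _ (hball _ hdist) _ hmem
      have hnext : ∃ b ∈ F (y (k + 1)), dist (y (k + 1)) b ≤ K * dist (y k) (y (k + 1)) :=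
        ⟨b, hb⟩
      have hspec : y (k + 2) ∈ F (y (k + 1)) ∧
          dist (y (k + 1)) (y (k + 2)) ≤ K * dist (y k) (y (k + 1)) := by
        rw [hy]; simp only [next, dif_pos hnext]; exact hnext.choose_spec
      refine ⟨hspec.1, hspec.2.trans ?_, hdist'⟩
      calc K * dist (y k) (y (k + 1)) ≤ K * (dist y₀ y₁ * K ^ k) := by gcongr
        _ = dist y₀ y₁ * K ^ (k + 1) := by ring
  refine ⟨y, rfl, fun k => ⟨(key k).1, (key k).2.1, ?_⟩⟩
  rw [mem_closedBall, dist_comm]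
  nlinarith [(key k).2.2, pow_nonneg hK0 k, div_nonneg (dist_nonneg (x := y₀) (y := y₁))
    (sub_pos.2 hK1).le]

/-- Nadler's fixed point theorem, localized to the ball reached by the iteration. -/
theorem exists_mem_self_of_setValued_contraction [CompleteSpace E] (hK0 : 0 ≤ K) (hK1 : K < 1)
    (h₁ : y₁ ∈ F y₀) (hclosed : ∀ p ∈ closedBall y₀ (dist y₀ y₁ / (1 - K)), IsClosed (F p))
    (hF : ∀ p ∈ closedBall y₀ (dist y₀ y₁ / (1 - K)), ∀ q ∈ closedBall y₀ (dist y₀ y₁ / (1 - K)),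
      ∀ a ∈ F q, ∃ b ∈ F p, dist a b ≤ K * dist q p) :
    ∃ y ∈ F y, dist y₁ y ≤ dist y₀ y₁ * K / (1 - K) := by
  obtain ⟨y, hy₁, hy⟩ := exists_seq_of_setValued_contraction hK0 hK1 h₁ hF
  obtain ⟨ybar, hlim⟩ := cauchySeq_tendsto_of_complete
    (cauchySeq_of_le_geometric K (dist y₀ y₁) hK1 fun k => (hy k).2.1)
  have hybar : ybar ∈ closedBall y₀ (dist y₀ y₁ / (1 - K)) :=
    isClosed_closedBall.mem_of_tendsto hlim (Eventually.of_forall fun k => (hy k).2.2)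
  choose b hbF hb using fun k => hF ybar hybar (y k) (hy k).2.2 (y (k + 1)) (hy k).1
  have hdist : Tendsto (fun k => dist (y k) ybar) atTop (𝓝 0) :=
    tendsto_iff_dist_tendsto_zero.1 hlim
  have hb_lim : Tendsto b atTop (𝓝 ybar) := by
    refine tendsto_iff_dist_tendsto_zero.2 <| squeeze_zero (fun _ => dist_nonneg)
      (fun k => (dist_triangle_left _ _ (y (k + 1))).trans (add_le_add (hb k) le_rfl)) ?_
    simpa using (hdist.const_mul K).add (hdist.comp (tendsto_add_atTop_nat 1))
  refine ⟨ybar, (hclosed ybar hybar).mem_of_tendsto hb_lim (Eventually.of_forall hbF), ?_⟩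
  simpa [hy₁] using dist_le_of_le_geometric_of_tendsto K (dist y₀ y₁) hK1
    (fun k => (hy k).2.1) hlim 1

end SetValuedContraction

section Graph

variable {m n Q : ℕ}

lemma norm_le_norm_projH_add_norm_projV (v : EucP m n) : ‖v‖ ≤ ‖projH v‖ + ‖projV v‖ := by
  have h : ‖v‖ ^ 2 = ‖projH v‖ ^ 2 + ‖projV v‖ ^ 2 := WithLp.prod_norm_sq_eq_of_L2 v
  nlinarith [norm_nonneg v, norm_nonneg (projH v), norm_nonneg (projV v)]

lemma Mmap_Phi_add (f : Euc m → AQ (Euc n) Q) (φ : Euc m → Euc n) (x : Euc m) (v : EucP m n) :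
    Mmap f (Phi φ x + v) = Theta (f (x + projH v)) (φ x + projV v) := rfl

lemma isNormalAt_iff (φ : Euc m → Euc n) (x : Euc m) (v : EucP m n) :
    IsNormalAt φ x v ↔ projH v = -(ContinuousLinearMap.adjoint (fderiv ℝ φ x)) (projV v) := by
  set B := ContinuousLinearMap.adjoint (fderiv ℝ φ x)
  have hinner : ∀ τ : Euc m, inner ℝ (graphMap (fderiv ℝ φ x) τ) v
      = inner ℝ τ (projH v + B (projV v)) := fun τ => by
    rw [WithLp.prod_inner_apply, inner_add_right,
      ContinuousLinearMap.adjoint_inner_right]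
    rfl
  rw [IsNormalAt, tangentSpace, Submodule.mem_orthogonal, ← add_eq_zero_iff_eq_neg]
  constructor
  · intro h
    have := h _ ⟨projH v + B (projV v), rfl⟩
    rwa [hinner, real_inner_self_eq_norm_sq, sq_eq_zero_iff, norm_eq_zero] at this
  · rintro h _ ⟨τ, rfl⟩
    rw [hinner, h, inner_zero_right]

lemma norm_adjoint_fderiv_apply_le {φ : Euc m → Euc n} {x : Euc m} {c : ℝ}
    (hA : ‖fderiv ℝ φ x‖ ≤ c) (u : Euc n) :
    ‖ContinuousLinearMap.adjoint (fderiv ℝ φ x) u‖ ≤ c * ‖u‖ :=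
  (ContinuousLinearMap.le_opNorm _ u).trans <| mul_le_mul_of_nonneg_right
    ((LinearIsometryEquiv.norm_map _ _).trans_le hA) (norm_nonneg u)

end Graph

section Comparison

variable {m n Q : ℕ} {φ : Euc m → Euc n} {f : Euc m → AQ (Euc n) Q} {x : Euc m} {c : ℝ}

lemma norm_le_two_mul_Gdist_of_Mmap_pos (hc : c ≤ 1 / 3) (hA : ‖fderiv ℝ φ x‖ ≤ c)
    (hLip : ∀ y ∈ ball x (c ^ 2), ∀ z ∈ ball x (c ^ 2), Gdist (f y) (f z) ≤ c * dist y z)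
    {v : EucP m n} (hv : IsNormalAt φ x v) (hvc : ‖v‖ < c) (hM : 0 < Mmap f (Phi φ x + v)) :
    ‖v‖ ≤ 2 * Gdist (f x) (AQmk fun _ => φ x) := by
  have hc0 : 0 < c := (norm_nonneg v).trans_lt hvc
  have hh : ‖projH v‖ ≤ c * ‖v‖ := by
    rw [(isNormalAt_iff φ x v).1 hv, norm_neg]
    exact (norm_adjoint_fderiv_apply_le hA _).trans (by gcongr; exact WithLp.norm_snd_le (x := v))
  have hxh : x + projH v ∈ ball x (c ^ 2) := by
    rw [mem_ball, dist_eq_norm, add_sub_cancel_left]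
    nlinarith
  rw [Mmap_Phi_add, Theta_pos_iff] at hM
  obtain ⟨b, hb, hdist⟩ := exists_dist_le_Gdist hM (f x)
  have hw : ‖projV v‖ ≤ c * ‖projH v‖ + Gdist (f x) (AQmk fun _ => φ x) := by
    calc ‖projV v‖ = dist (φ x + projV v) (φ x) := by rw [dist_eq_norm, add_sub_cancel_left]
      _ ≤ dist (φ x + projV v) b + dist b (φ x) := dist_triangle _ _ _
      _ ≤ c * ‖projH v‖ + Gdist (f x) (AQmk fun _ => φ x) := by
        rw [dist_eq_norm b]
        gcongr
        · refine hdist.trans ((hLip _ hxh x (mem_ball_self (by positivity))).trans_eq ?_)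
          rw [dist_eq_norm, add_sub_cancel_left]
        · exact norm_sub_le_Gdist_AQmk hb _
  have hch : c * ‖projH v‖ ≤ ‖v‖ / 9 := by
    have hcc : c * c ≤ 1 / 9 := by nlinarith
    calc c * ‖projH v‖ ≤ c * (c * ‖v‖) := by gcongr
      _ ≤ ‖v‖ / 9 := by nlinarith [norm_nonneg v]
  nlinarith [norm_le_norm_projH_add_norm_projV v, norm_nonneg v]

lemma exists_fixedPoint_AQspt_near (hc0 : 0 < c) (hc1 : c < 1) (hA : ‖fderiv ℝ φ x‖ ≤ c)
    (hLip : ∀ y ∈ ball x (c ^ 2), ∀ z ∈ ball x (c ^ 2), Gdist (f y) (f z) ≤ c * dist y z)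
    {y₁ : Euc n} (hy₁ : y₁ ∈ AQspt (f x)) (hR : dist (φ x) y₁ / (1 - c ^ 2) < c) :
    ∃ y ∈ AQspt (f (x - ContinuousLinearMap.adjoint (fderiv ℝ φ x) (y - φ x))),
      dist y₁ y ≤ dist (φ x) y₁ * c ^ 2 / (1 - c ^ 2) := by
  set B := ContinuousLinearMap.adjoint (fderiv ℝ φ x)
  have hB : ∀ p q : Euc n, dist (x - B (q - φ x)) (x - B (p - φ x)) ≤ c * dist q p := by
    intro p q
    rw [dist_sub_left, dist_eq_norm, ← map_sub, sub_sub_sub_cancel_right, dist_eq_norm]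
    exact norm_adjoint_fderiv_apply_le hA _
  have hπ : ∀ p ∈ closedBall (φ x) (dist (φ x) y₁ / (1 - c ^ 2)),
      x - B (p - φ x) ∈ ball x (c ^ 2) := by
    intro p hp
    have := hB (φ x) p
    rw [sub_self, map_zero, sub_zero] at this
    rw [mem_ball]
    nlinarith [mem_closedBall.1 hp]
  refine exists_mem_self_of_setValued_contraction (F := fun y => AQspt (f (x - B (y - φ x))))
    (sq_nonneg c) (by nlinarith) (by simpa using hy₁) (fun _ _ => (Set.finite_range _).isClosed) ?_
  intro p hp q hq a ha
  obtain ⟨b, hb, hab⟩ := exists_dist_le_Gdist ha (f (x - B (p - φ x)))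
  refine ⟨b, hb, hab.trans ((hLip _ (hπ q hq) _ (hπ p hp)).trans ?_)⟩
  calc c * dist (x - B (q - φ x)) (x - B (p - φ x)) ≤ c * (c * dist q p) := by gcongr; exact hB p q
    _ = c ^ 2 * dist q p := by ring

lemma exists_isNormalAt_Mmap_pos (hc0 : 0 < c) (hc : c ≤ 1 / 3) (hA : ‖fderiv ℝ φ x‖ ≤ c)
    (hLip : ∀ y ∈ ball x (c ^ 2), ∀ z ∈ ball x (c ^ 2), Gdist (f y) (f z) ≤ c * dist y z)
    {y₁ : Euc n} (hy₁ : y₁ ∈ AQspt (f x)) (hd : ‖y₁ - φ x‖ < c * (1 - c)) :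
    ∃ v, IsNormalAt φ x v ∧ ‖v‖ < c ∧ 0 < Mmap f (Phi φ x + v) ∧ ‖y₁ - φ x‖ ≤ 2 * ‖v‖ := by
  set B := ContinuousLinearMap.adjoint (fderiv ℝ φ x)
  set d := ‖y₁ - φ x‖
  have hdd : dist (φ x) y₁ = d := by rw [dist_comm, dist_eq_norm]
  have ht : 0 < 1 - c ^ 2 := by nlinarith
  obtain ⟨y, hy, hy₁y⟩ := exists_fixedPoint_AQspt_near hc0 (by linarith) hA hLip hy₁
    (by rw [hdd, div_lt_iff₀ ht]; nlinarith)
  rw [hdd, le_div_iff₀ ht] at hy₁y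
  set w := y - φ x
  have hw_le : ‖w‖ ≤ d + dist y₁ y :=
    calc ‖w‖ = dist y (φ x) := (dist_eq_norm _ _).symm
      _ ≤ dist y y₁ + dist y₁ (φ x) := dist_triangle _ _ _
      _ = d + dist y₁ y := by rw [dist_comm y, add_comm, dist_eq_norm y₁ (φ x)]
  have hw_ge : d ≤ dist y₁ y + ‖w‖ :=
    calc d = dist y₁ (φ x) := (dist_eq_norm _ _).symm
      _ ≤ dist y₁ y + dist y (φ x) := dist_triangle _ _ _
      _ = dist y₁ y + ‖w‖ := by rw [dist_eq_norm y]
  have hd0 : 0 ≤ d := norm_nonneg _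
  have hv_le : ‖mkP (-B w) w‖ ≤ (1 + c) * ‖w‖ := by
    refine (norm_le_norm_projH_add_norm_projV _).trans ?_
    have : ‖B w‖ ≤ c * ‖w‖ := norm_adjoint_fderiv_apply_le hA w
    simp only [projH, projV, mkP, Equiv.apply_symm_apply, norm_neg]
    linarith
  refine ⟨mkP (-B w) w, (isNormalAt_iff φ x _).2 rfl, ?_, ?_, ?_⟩
  · have hde : (1 + c) * (d + dist y₁ y) < c := by
      have h1c : 0 < 1 - c := by linarith
      have : (1 + c) * (d + dist y₁ y) * (1 - c) < c * (1 - c) := by nlinarith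
      exact lt_of_mul_lt_mul_right this h1c.le
    calc ‖mkP (-B w) w‖ ≤ (1 + c) * ‖w‖ := hv_le
      _ ≤ (1 + c) * (d + dist y₁ y) := by gcongr
      _ < c := hde
  · rw [Mmap_Phi_add, Theta_pos_iff]
    convert hy using 3
    · exact (sub_eq_add_neg _ _).symm
    · exact add_sub_cancel _ _
  · have hwv : ‖w‖ ≤ ‖mkP (-B w) w‖ := WithLp.norm_snd_le (x := mkP (-B w) w)
    have hc3 : 3 * c ^ 2 ≤ 1 := by nlinarith
    have h2e : 2 * dist y₁ y ≤ d := by nlinarith [mul_nonneg hd0 (sub_nonneg.2 hc3)]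
    linarith

lemma Gdist_AQmk_zero_le_of_isNField (hc : c ≤ 1 / 3) (hA : ‖fderiv ℝ φ x‖ ≤ c)
    (hLip : ∀ y ∈ ball x (c ^ 2), ∀ z ∈ ball x (c ^ 2), Gdist (f y) (f z) ≤ c * dist y z)
    {T : AQ (EucP m n) Q} (hT : IsNField c φ f x T) :
    Gdist T (AQmk fun _ => 0) ≤ 2 * √Q * Gdist (f x) (AQmk fun _ => φ x) := by
  rw [mul_comm 2, mul_assoc]
  refine Gdist_AQmk_le (mul_nonneg zero_le_two (Gdist_nonneg _ _)) fun v hv => ?_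
  have hθ := (Theta_pos_iff T v).2 hv
  rw [hT v] at hθ
  split_ifs at hθ with h
  · simpa using norm_le_two_mul_Gdist_of_Mmap_pos hc hA hLip h.1 h.2 hθ
  · exact absurd hθ (lt_irrefl 0)

lemma Gdist_le_of_isNField (hQ : 0 < Q) (hc0 : 0 < c) (hc : c ≤ 1 / 3)
    (hA : ‖fderiv ℝ φ x‖ ≤ c)
    (hLip : ∀ y ∈ ball x (c ^ 2), ∀ z ∈ ball x (c ^ 2), Gdist (f y) (f z) ≤ c * dist y z)
    (hsheets : ∀ y ∈ AQspt (f x), ‖y - φ x‖ < c * (1 - c))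
    {T : AQ (EucP m n) Q} (hT : IsNField c φ f x T) :
    Gdist (f x) (AQmk fun _ => φ x) ≤ 2 * √Q * Gdist T (AQmk fun _ => 0) := by
  have : Nonempty (Fin Q) := ⟨⟨0, hQ⟩⟩
  obtain ⟨l, hl⟩ := Finite.exists_max fun l => ‖(f x).out l - φ x‖
  obtain ⟨v, hvN, hvc, hM, hfar⟩ :=
    exists_isNormalAt_Mmap_pos hc0 hc hA hLip ⟨l, rfl⟩ (hsheets _ ⟨l, rfl⟩)
  have hv : v ∈ AQspt T := by rw [← Theta_pos_iff, hT v, if_pos ⟨hvN, hvc⟩]; exact hM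
  have hvT : ‖v‖ ≤ Gdist T (AQmk fun _ => 0) := by simpa using norm_sub_le_Gdist_AQmk hv 0
  calc Gdist (f x) (AQmk fun _ => φ x) ≤ √Q * ‖(f x).out l - φ x‖ :=
        Gdist_AQmk_le (norm_nonneg _) (by rintro _ ⟨k, rfl⟩; exact hl k)
    _ ≤ √Q * (2 * Gdist T (AQmk fun _ => 0)) := by gcongr; linarith
    _ = 2 * √Q * Gdist T (AQmk fun _ => 0) := by ring

lemma HypH.local_bounds {s r c L : ℝ} (hH : HypH s r c L φ f) (hc0 : 0 < c) (hc : c ≤ 1 / 3)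
    (hcr : c ≤ r - s) (hcs : c ≤ (1 - s) / 2) (hx : x ∈ ball (0 : Euc m) s) :
    ‖fderiv ℝ φ x‖ ≤ c ∧
      (∀ y ∈ ball x (c ^ 2), ∀ z ∈ ball x (c ^ 2), Gdist (f y) (f z) ≤ c * dist y z) ∧
      ∀ y ∈ AQspt (f x), ‖y - φ x‖ < c * (1 - c) := by
  obtain ⟨hL0, -, hLip, hC2, hC0⟩ := hH
  have hbound := hC2 x hx
  have hD2 := norm_nonneg (fderiv ℝ (fderiv ℝ φ) x)
  have hxs := mem_ball_zero_iff.1 hx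
  refine ⟨by linarith [norm_nonneg (φ x)], fun y hy z hz => ?_, fun y hy => ?_⟩
  · have hsub : ball x (c ^ 2) ⊆ ball 0 r :=
      ball_subset_ball' (by rw [dist_zero_right]; nlinarith)
    exact (hLip y (hsub hy) z (hsub hz)).trans <| mul_le_mul_of_nonneg_right
      (by linarith [norm_nonneg (φ x), norm_nonneg (fderiv ℝ φ x)]) dist_nonneg
  · have hy0 := norm_sub_le_Gdist_AQmk hy 0
    have hfx := hC0 x hx x (ball_subset_ball (by linarith) hx)
    calc ‖y - φ x‖ ≤ ‖y - 0‖ + ‖φ x‖ := by simpa using norm_sub_le y (φ x)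
      _ ≤ c * s := by linarith
      _ < c * (1 - c) := by gcongr; linarith

end Comparison

theorem reparametrization_comparison_estimate_general
    (m n Q : ℕ) (hQ : 0 < Q)
    (s r : ℝ) (hsr : s < r) (hr : r < 1) :
    ∃ c₀ : ℝ, 0 < c₀ ∧
      ∀ (φ : Euc m → Euc n) (f : Euc m → AQ (Euc n) Q) (L : ℝ),
        HypH s r c₀ L φ f →
        ∀ N : Euc m → AQ (EucP m n) Q,
          (∀ x ∈ ball (0 : Euc m) s, IsNField c₀ φ f x (N x)) →
          ∀ x ∈ ball (0 : Euc m) s,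
            (1 / (2 * Real.sqrt Q)) * Gdist (N x) (AQmk (fun _ => (0 : EucP m n)))
                ≤ Gdist (f x) (AQmk (fun _ => φ x)) ∧
            Gdist (f x) (AQmk (fun _ => φ x))
                ≤ 2 * Real.sqrt Q * Gdist (N x) (AQmk (fun _ => (0 : EucP m n))) := by
  refine ⟨min (1 / 3) (min (r - s) ((1 - s) / 2)),
    lt_min (by norm_num) (lt_min (by linarith) (by linarith)), ?_⟩
  rintro φ f L hH N hN x hx
  set c₀ := min (1 / 3 : ℝ) (min (r - s) ((1 - s) / 2))
  have hc0 : 0 < c₀ := lt_min (by norm_num) (lt_min (by linarith) (by linarith))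
  have hc : c₀ ≤ 1 / 3 := min_le_left _ _
  have hcr : c₀ ≤ r - s := (min_le_right _ _).trans (min_le_left _ _)
  have hcs : c₀ ≤ (1 - s) / 2 := (min_le_right _ _).trans (min_le_right _ _)
  obtain ⟨hA, hLip, hsheets⟩ := hH.local_bounds hc0 hc hcr hcs hx
  constructor
  · rw [one_div, inv_mul_le_iff₀ (by positivity)]
    exact Gdist_AQmk_zero_le_of_isNField hc hA hLip (hN x hx)
  · exact Gdist_le_of_isNField hQ hc0 hc hA hLip hsheets (hN x hx)

/-- **Reparametrization: comparison estimate.** There is `c₀ > 0` (depending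
on `m, n, Q, r-s, r/s`, equivalently on `m, n, Q, s, r`) such that, under hypothesis (H),
the well-defined normal field `N` satisfies, for every `x ∈ B_s`,
`(2√Q)⁻¹ |N(Φ(x))| ≤ 𝒢(f(x), Q⟦φ(x)⟧) ≤ 2√Q |N(Φ(x))|`. -/
theorem reparametrization_comparison_estimate
    (m n Q : ℕ) (hm : 0 < m) (hn : 0 < n) (hQ : 0 < Q)
    (s r : ℝ) (hs : 0 < s) (hsr : s < r) (hr : r < 1) :
    ∃ c₀ : ℝ, 0 < c₀ ∧
      ∀ (φ : Euc m → Euc n) (f : Euc m → AQ (Euc n) Q) (L : ℝ),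
        HypH s r c₀ L φ f →
        ∀ N : Euc m → AQ (EucP m n) Q,
          (∀ x ∈ ball (0 : Euc m) s, IsNField c₀ φ f x (N x)) →
          ∀ x ∈ ball (0 : Euc m) s,
            (1 / (2 * Real.sqrt Q)) * Gdist (N x) (AQmk (fun _ => (0 : EucP m n)))
                ≤ Gdist (f x) (AQmk (fun _ => φ x)) ∧
            Gdist (f x) (AQmk (fun _ => φ x))
                ≤ 2 * Real.sqrt Q * Gdist (N x) (AQmk (fun _ => (0 : EucP m n))) :=
  reparametrization_comparison_estimate_general m n Q hQ s r hsr hr
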